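/- For any probability mass functions p, q, r on a finite type U, the square root of the Jensen–Shannon divergence satisfies the triangle inequality: √(JSD(p, q)) ≤ √(JSD(p, r)) + √(JSD(r, q)). -/

import Mathlib

open Finset

/-- A probability mass function on a finite type: nonnegative and summing to 1. -/
def IsPMF {U : Type*} [Fintype U] (p : U → ℝ) : Prop :=
  (∀ i, 0 ≤ p i) ∧ ∑ i, p i = 1

/-- Kullback–Leibler divergence (with the convention `0 * log (0 / x) = 0`,
which holds automatically in `ℝ`). -/
noncomputable def KL {U : Type*} [Fintype U] (p q : U → ℝ) : ℝ :=
  ∑ i, p i * Real.log (p i / q i)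

/-- Jensen–Shannon divergence. -/
noncomputable def JSD {U : Type*} [Fintype U] (p q : U → ℝ) : ℝ :=
  (1 / 2) * KL p (fun i => (p i + q i) / 2) + (1 / 2) * KL q (fun i => (p i + q i) / 2)

/-!
`4 · JSD p q = ∑ᵢ jsGap (p i) (q i)`, where `jsGap x y = φ(2x) + φ(2y) - 2φ(x + y)` with
`φ t = t log t`, and `jsGap` is a squared `L²` distance: for `x, y ≥ 0`,
`jsGap x y = ∫₀^∞ ((e^{-xu} - e^{-yu}) / u)² du`.
Indeed, `(e^{-xu} - e^{-yu}) / u = ∫_x^y e^{-tu} dt`, so by Tonelli the right side is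
`∫_x^y ∫_x^y 1 / (s + t) dt ds`, which integrates to `jsGap x y`. Hence `√jsGap` satisfies the
triangle inequality by Minkowski's inequality in `L²(0, ∞)`, and `√JSD`, the `ℓ²` norm of the
coordinatewise `√jsGap / 2`, satisfies it by Minkowski's inequality in `ℓ²`.
-/

open Real MeasureTheory Set

noncomputable def jsGap (x y : ℝ) : ℝ :=
  2 * x * log (2 * x) + 2 * y * log (2 * y) - 2 * (x + y) * log (x + y)

theorem jsGap_comm (x y : ℝ) : jsGap x y = jsGap y x := by
  rw [jsGap, jsGap, add_comm x y]; ring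

theorem jsGap_nonneg {x y : ℝ} (hx : 0 ≤ x) (hy : 0 ≤ y) : 0 ≤ jsGap x y := by
  have h := convexOn_mul_log.2 (mem_Ici.2 (by positivity : 0 ≤ 2 * x))
    (mem_Ici.2 (by positivity : 0 ≤ 2 * y)) (by norm_num : (0 : ℝ) ≤ 1 / 2)
    (by norm_num : (0 : ℝ) ≤ 1 / 2) (by norm_num)
  simp only [smul_eq_mul] at h
  rw [show 1 / 2 * (2 * x) + 1 / 2 * (2 * y) = x + y by ring] at h
  rw [jsGap]
  linarith

theorem mul_log_div_add_mul_log_div {x y : ℝ} (hx : 0 ≤ x) (hy : 0 ≤ y) :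
    x * log (x / ((x + y) / 2)) + y * log (y / ((x + y) / 2)) = jsGap x y / 2 := by
  have expand : ∀ a, 0 ≤ a → a ≤ x + y →
      a * log (a / ((x + y) / 2)) = a * log (2 * a) - a * log (x + y) := by
    intro a ha hay
    rcases ha.eq_or_lt with rfl | ha
    · simp
    rw [div_div_eq_mul_div, mul_comm a 2, log_div (by positivity) (by linarith)]
    ring
  rw [expand x hx (by linarith), expand y hy (by linarith), jsGap]
  ring

theorem JSD_eq_sum_jsGap {U : Type*} [Fintype U] {p q : U → ℝ} (hp : ∀ i, 0 ≤ p i)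
    (hq : ∀ i, 0 ≤ q i) : JSD p q = (∑ i, jsGap (p i) (q i)) / 4 := by
  rw [JSD, KL, KL, ← mul_add, ← sum_add_distrib, sum_div, mul_sum]
  simp only [mul_log_div_add_mul_log_div (hp _) (hq _)]
  congr 1 with i
  ring

theorem intervalIntegrable_log_add (c : ℝ) {a b : ℝ} :
    IntervalIntegrable (fun s => log (s + c)) volume a b :=
  (IntervalIntegrable.comp_add_right_iff).2 intervalIntegral.intervalIntegrable_log'

theorem integral_log_add_sub_log_add (x y : ℝ) :
    ∫ s in x..y, (log (s + y) - log (s + x)) = jsGap x y := by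
  have shift (c : ℝ) : ∫ s in x..y, log (s + c) = ∫ s in x + c..y + c, log s :=
    intervalIntegral.integral_comp_add_right log c
  rw [intervalIntegral.integral_sub (intervalIntegrable_log_add y) (intervalIntegrable_log_add x),
    shift, shift, integral_log, integral_log, jsGap, ← two_mul, ← two_mul, add_comm y x]
  ring

theorem integral_inv_add {s x y : ℝ} (hx : 0 < s + x) (hxy : x ≤ y) :
    ∫ t in x..y, (s + t)⁻¹ = log (s + y) - log (s + x) := by
  rw [intervalIntegral.integral_comp_add_left (fun t => t⁻¹),
    integral_inv_of_pos hx (by linarith), log_div (by linarith) hx.ne']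

theorem lintegral_exp_neg_mul_Ioi {a : ℝ} (ha : 0 < a) :
    ∫⁻ u in Ioi 0, ENNReal.ofReal (exp (-a * u)) = ENNReal.ofReal a⁻¹ := by
  rw [← ofReal_integral_eq_lintegral_ofReal (integrableOn_exp_mul_Ioi (by linarith) 0)
    (ae_of_all _ fun _ => (exp_pos _).le), integral_exp_mul_Ioi (by linarith)]
  simp [div_neg, neg_div]

theorem ofReal_intervalIntegral_eq_lintegral {f : ℝ → ℝ} {a b : ℝ} (hab : a ≤ b)
    (hf : IntervalIntegrable f volume a b) (hf_nonneg : ∀ t ∈ Ioc a b, 0 ≤ f t) :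
    ENNReal.ofReal (∫ t in a..b, f t) = ∫⁻ t in Ioc a b, ENNReal.ofReal (f t) := by
  rw [intervalIntegral.integral_of_le hab]
  exact ofReal_integral_eq_lintegral_ofReal hf.1
    ((ae_restrict_iff' measurableSet_Ioc).2 (ae_of_all _ hf_nonneg))

noncomputable def expSubExpDiv (x y u : ℝ) : ℝ := (exp (-x * u) - exp (-y * u)) / u

theorem expSubExpDiv_add (x y z u : ℝ) :
    expSubExpDiv x y u + expSubExpDiv y z u = expSubExpDiv x z u := by
  simp only [expSubExpDiv]; ring

theorem expSubExpDiv_swap (x y u : ℝ) : expSubExpDiv y x u = -expSubExpDiv x y u := by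
  simp only [expSubExpDiv]; ring

theorem expSubExpDiv_eq_integral (x y : ℝ) {u : ℝ} (hu : u ≠ 0) :
    expSubExpDiv x y u = ∫ t in x..y, exp (-t * u) := by
  have h := intervalIntegral.integral_comp_mul_right (a := x) (b := y) exp (neg_ne_zero.2 hu)
  simp only [mul_neg, ← neg_mul, integral_exp, smul_eq_mul] at h
  rw [h, expSubExpDiv, inv_neg]
  ring

theorem enorm_expSubExpDiv_sq {x y u : ℝ} (hxy : x ≤ y) (hu : 0 < u) :
    ‖expSubExpDiv x y u‖ₑ ^ 2 =
      ∫⁻ s in Ioc x y, ∫⁻ t in Ioc x y, ENNReal.ofReal (exp (-(s + t) * u)) := by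
  have hexp : Continuous fun t => exp (-t * u) := by fun_prop
  rw [expSubExpDiv_eq_integral x y hu.ne', Real.enorm_eq_ofReal
      (intervalIntegral.integral_nonneg hxy fun t _ => (exp_pos _).le),
    ofReal_intervalIntegral_eq_lintegral hxy (hexp.intervalIntegrable x y)
      fun t _ => (exp_pos _).le,
    sq, ← lintegral_lintegral_mul (by fun_prop) (by fun_prop)]
  simp only [← ENNReal.ofReal_mul (exp_pos _).le, ← exp_add, add_mul, neg_add]

theorem lintegral_enorm_expSubExpDiv_sq_of_le {x y : ℝ} (hx : 0 ≤ x) (hxy : x ≤ y) :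
    ∫⁻ u in Ioi 0, ‖expSubExpDiv x y u‖ₑ ^ 2 = ENNReal.ofReal (jsGap x y) := by
  have hpos : ∀ s ∈ Ioc x y, 0 < s + x := fun s hs => by linarith [hs.1]
  calc ∫⁻ u in Ioi 0, ‖expSubExpDiv x y u‖ₑ ^ 2
      = ∫⁻ u in Ioi 0, ∫⁻ s in Ioc x y, ∫⁻ t in Ioc x y, ENNReal.ofReal (exp (-(s + t) * u)) :=
        setLIntegral_congr_fun measurableSet_Ioi fun u hu => enorm_expSubExpDiv_sq hxy hu
    _ = ∫⁻ s in Ioc x y, ∫⁻ t in Ioc x y, ∫⁻ u in Ioi 0, ENNReal.ofReal (exp (-(s + t) * u)) := by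
        rw [lintegral_lintegral_swap (by fun_prop)]
        exact lintegral_congr fun s => lintegral_lintegral_swap (by fun_prop)
    _ = ∫⁻ s in Ioc x y, ∫⁻ t in Ioc x y, ENNReal.ofReal (s + t)⁻¹ := by
        refine setLIntegral_congr_fun measurableSet_Ioc fun s hs =>
          setLIntegral_congr_fun measurableSet_Ioc fun t ht => ?_
        exact lintegral_exp_neg_mul_Ioi (by linarith [hpos s hs, ht.1])
    _ = ∫⁻ s in Ioc x y, ENNReal.ofReal (log (s + y) - log (s + x)) := by
        refine setLIntegral_congr_fun measurableSet_Ioc fun s hs => ?_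
        rw [← integral_inv_add (hpos s hs) hxy, ofReal_intervalIntegral_eq_lintegral hxy]
        · refine intervalIntegral.intervalIntegrable_inv (fun t ht => ?_) (by fun_prop)
          rw [uIcc_of_le hxy] at ht
          linarith [hpos s hs, ht.1]
        · exact fun t ht => inv_nonneg.2 (by linarith [hpos s hs, ht.1])
    _ = ENNReal.ofReal (jsGap x y) := by
        rw [← integral_log_add_sub_log_add, ofReal_intervalIntegral_eq_lintegral hxy]
        · exact (intervalIntegrable_log_add y).sub (intervalIntegrable_log_add x)
        · exact fun s hs => sub_nonneg.2 (log_le_log (hpos s hs) (by linarith [hs.2]))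

theorem lintegral_enorm_expSubExpDiv_sq {x y : ℝ} (hx : 0 ≤ x) (hy : 0 ≤ y) :
    ∫⁻ u in Ioi 0, ‖expSubExpDiv x y u‖ₑ ^ 2 = ENNReal.ofReal (jsGap x y) := by
  rcases le_total x y with hxy | hyx
  · exact lintegral_enorm_expSubExpDiv_sq_of_le hx hxy
  · simp_rw [← enorm_neg (expSubExpDiv x y _), ← expSubExpDiv_swap, jsGap_comm x y]
    exact lintegral_enorm_expSubExpDiv_sq_of_le hy hyx

theorem eLpNorm_expSubExpDiv {x y : ℝ} (hx : 0 ≤ x) (hy : 0 ≤ y) :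
    eLpNorm (expSubExpDiv x y) 2 (volume.restrict (Ioi 0)) = ENNReal.ofReal √(jsGap x y) := by
  simp only [eLpNorm_eq_lintegral_rpow_enorm_toReal two_ne_zero ENNReal.ofNat_ne_top,
    ENNReal.toReal_ofNat, ENNReal.rpow_two]
  rw [lintegral_enorm_expSubExpDiv_sq hx hy,
    ENNReal.ofReal_rpow_of_nonneg (jsGap_nonneg hx hy) (by norm_num), sqrt_eq_rpow]

theorem sqrt_jsGap_le_add {x y z : ℝ} (hx : 0 ≤ x) (hy : 0 ≤ y) (hz : 0 ≤ z) :
    √(jsGap x z) ≤ √(jsGap x y) + √(jsGap y z) := by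
  have hmeas (a b : ℝ) : AEStronglyMeasurable (expSubExpDiv a b) (volume.restrict (Ioi 0)) := by
    refine Measurable.aestronglyMeasurable ?_
    unfold expSubExpDiv; fun_prop
  have h := eLpNorm_add_le (hmeas x y) (hmeas y z) one_le_two
  rw [show expSubExpDiv x y + expSubExpDiv y z = expSubExpDiv x z from
      funext (expSubExpDiv_add x y z), eLpNorm_expSubExpDiv hx hz, eLpNorm_expSubExpDiv hx hy,
    eLpNorm_expSubExpDiv hy hz, ← ENNReal.ofReal_add (sqrt_nonneg _) (sqrt_nonneg _)] at h
  exact (ENNReal.ofReal_le_ofReal_iff (by positivity)).1 h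

theorem sqrt_sum_le_sqrt_sum_add_sqrt_sum {ι : Type*} [Fintype ι] {a b c : ι → ℝ}
    (hb : ∀ i, 0 ≤ b i) (hc : ∀ i, 0 ≤ c i) (h : ∀ i, √(a i) ≤ √(b i) + √(c i)) :
    √(∑ i, a i) ≤ √(∑ i, b i) + √(∑ i, c i) := by
  let v : EuclideanSpace ℝ ι := WithLp.toLp 2 fun i => √(b i)
  let w : EuclideanSpace ℝ ι := WithLp.toLp 2 fun i => √(c i)
  have norm_toLp_sqrt {f : ι → ℝ} (hf : ∀ i, 0 ≤ f i) :
      ‖(WithLp.toLp 2 fun i => √(f i) : EuclideanSpace ℝ ι)‖ = √(∑ i, f i) := by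
    simp [EuclideanSpace.norm_eq, sq_sqrt (hf _)]
  have hsum : ∑ i, a i ≤ ∑ i, (√(b i) + √(c i)) ^ 2 := sum_le_sum fun i _ =>
    calc a i ≤ √(a i) ^ 2 := by rw [sq_sqrt']; exact le_max_left _ _
      _ ≤ _ := pow_le_pow_left₀ (sqrt_nonneg _) (h i) 2
  calc √(∑ i, a i) ≤ ‖v + w‖ := by
        rw [EuclideanSpace.norm_eq]
        simpa [v, w, sq_abs] using sqrt_le_sqrt hsum
    _ ≤ ‖v‖ + ‖w‖ := norm_add_le v w
    _ = √(∑ i, b i) + √(∑ i, c i) := by rw [norm_toLp_sqrt hb, norm_toLp_sqrt hc]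

/-- The square root of the Jensen–Shannon divergence satisfies the triangle inequality. -/
theorem sqrt_JSD_triangle {U : Type*} [Fintype U] (p q r : U → ℝ)
    (hp : IsPMF p) (hq : IsPMF q) (hr : IsPMF r) :
    Real.sqrt (JSD p q) ≤ Real.sqrt (JSD p r) + Real.sqrt (JSD r q) := by
  rw [JSD_eq_sum_jsGap hp.1 hq.1, JSD_eq_sum_jsGap hp.1 hr.1, JSD_eq_sum_jsGap hr.1 hq.1,
    sqrt_div' _ zero_le_four, sqrt_div' _ zero_le_four, sqrt_div' _ zero_le_four, ← add_div]
  refine div_le_div_of_nonneg_right ?_ (sqrt_nonneg 4)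
  exact sqrt_sum_le_sqrt_sum_add_sqrt_sum (fun i => jsGap_nonneg (hp.1 i) (hr.1 i))
    (fun i => jsGap_nonneg (hr.1 i) (hq.1 i))
    (fun i => sqrt_jsGap_le_add (hp.1 i) (hr.1 i) (hq.1 i))
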